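/- arXiv:1509.05727 — 2 statements merged into one kernel-verified Lean document; each statement's English description precedes it below -/
import Mathlib

section
/- Let p be a prime, and in F_p set x = (1,0,0,0,0,0) and y = (0,1,0,0,0,0). Let S ⊆ F_p contain the identity, be closed under multiplication (u,v ∈ S ⇒ u·v ∈ S) and under left division (u,v ∈ S ⇒ u\v ∈ S). If S contains x·z and y·z' for some z, z' ∈ F_p whose first two coordinates are zero, then S = F_p. -/
/-- The modular overflow indicator `(a,b)_p`. -/
def ovf (p : ℕ) (a b : ZMod p) : ZMod p := if p ≤ a.val + b.val then 1 else 0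

/-- The carrier `(ℤ_p)⁶` of the loop `F_p`. -/
abbrev FpCarrier (p : ℕ) := ZMod p × ZMod p × ZMod p × ZMod p × ZMod p × ZMod p

/-- The multiplication of the loop `F_p`. -/
def fpMul (p : ℕ) : FpCarrier p → FpCarrier p → FpCarrier p
  | (a1, a2, a3, a4, a5, a6), (b1, b2, b3, b4, b5, b6) =>
    (a1 + b1, a2 + b2, a3 + b3 + ovf p a1 b1, a4 + b4 + ovf p a2 b2,
     a5 + b5 - a1 * b1 * (a2 + b2), a6 + b6 + a2 * b2 * (a1 + b1))

section Aux

variable (p : ℕ) [NeZero p]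

lemma ovf_right_zero (a : ZMod p) : ovf p a 0 = 0 := by
  have := ZMod.val_lt a
  simp [ovf]
  omega

lemma ovf_left_zero (a : ZMod p) : ovf p 0 a = 0 := by
  have := ZMod.val_lt a
  simp [ovf]
  omega

lemma fpMul_central (u3 u4 u5 u6 v3 v4 v5 v6 : ZMod p) :
    fpMul p (0, 0, u3, u4, u5, u6) (0, 0, v3, v4, v5, v6)
      = (0, 0, u3 + v3, u4 + v4, u5 + v5, u6 + v6) := by
  simp [fpMul, ovf_left_zero]

lemma fpMul_central_right (u : FpCarrier p) (v3 v4 v5 v6 : ZMod p) :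
    fpMul p u (0, 0, v3, v4, v5, v6)
      = (u.1, u.2.1, u.2.2.1 + v3, u.2.2.2.1 + v4, u.2.2.2.2.1 + v5, u.2.2.2.2.2 + v6) := by
  obtain ⟨u1, u2, u3, u4, u5, u6⟩ := u
  simp [fpMul, ovf_right_zero]

/-- Powers in `F_p` (left-iterated). -/
def fpPow (u : FpCarrier p) : ℕ → FpCarrier p
  | 0 => (0, 0, 0, 0, 0, 0)
  | n + 1 => fpMul p (fpPow u n) u

lemma fpPow_central (u3 u4 u5 u6 : ZMod p) (n : ℕ) :
    fpPow p (0, 0, u3, u4, u5, u6) n = (0, 0, n * u3, n * u4, n * u5, n * u6) := by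
  induction n with
  | zero => simp [fpPow]
  | succ n ih =>
    rw [fpPow, ih, fpMul_central]
    push_cast
    refine Prod.ext rfl (Prod.ext rfl (Prod.ext ?_ (Prod.ext ?_ (Prod.ext ?_ ?_)))) <;> ring

lemma fpPow_a (hp2 : 1 < p) (z3 z4 z5 z6 : ZMod p) (n : ℕ) (hn : n < p) :
    fpPow p (1, 0, z3, z4, z5, z6) n
      = ((n : ZMod p), 0, n * z3, n * z4, n * z5, n * z6) := by
  induction n with
  | zero => simp [fpPow]
  | succ n ih =>
    rw [fpPow, ih (by omega)]
    have hov : ovf p (n : ZMod p) 1 = 0 := by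
      have h1 : ((n : ZMod p)).val = n := ZMod.val_natCast_of_lt (by omega)
      haveI : Fact (1 < p) := ⟨hp2⟩
      have h2 : (1 : ZMod p).val = 1 := ZMod.val_one p
      simp [ovf, h1, h2]
      omega
    simp only [fpMul, hov, ovf_left_zero, ovf_right_zero]
    push_cast
    refine Prod.ext ?_ (Prod.ext ?_ (Prod.ext ?_ (Prod.ext ?_ (Prod.ext ?_ ?_)))) <;> ring

lemma fpPow_b (hp2 : 1 < p) (z3 z4 z5 z6 : ZMod p) (n : ℕ) (hn : n < p) :
    fpPow p (0, 1, z3, z4, z5, z6) n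
      = (0, (n : ZMod p), n * z3, n * z4, n * z5, n * z6) := by
  induction n with
  | zero => simp [fpPow]
  | succ n ih =>
    rw [fpPow, ih (by omega)]
    have hov : ovf p (n : ZMod p) 1 = 0 := by
      have h1 : ((n : ZMod p)).val = n := ZMod.val_natCast_of_lt (by omega)
      haveI : Fact (1 < p) := ⟨hp2⟩
      have h2 : (1 : ZMod p).val = 1 := ZMod.val_one p
      simp [ovf, h1, h2]
      omega
    simp only [fpMul, hov, ovf_left_zero, ovf_right_zero]
    push_cast
    refine Prod.ext ?_ (Prod.ext ?_ (Prod.ext ?_ (Prod.ext ?_ (Prod.ext ?_ ?_)))) <;> ring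

lemma fpPow_a_p (hp2 : 1 < p) (z3 z4 z5 z6 : ZMod p) :
    fpPow p (1, 0, z3, z4, z5, z6) p = (0, 0, 1, 0, 0, 0) := by
  obtain ⟨m, rfl⟩ : ∃ m, p = m + 1 := ⟨p - 1, by omega⟩
  rw [fpPow, fpPow_a _ hp2 _ _ _ _ m (by omega)]
  have h0 : ((m : ZMod (m + 1)) + 1) = 0 := by
    rw [← Nat.cast_one (R := ZMod (m + 1)), ← Nat.cast_add]
    exact ZMod.natCast_self _
  have hov : ovf (m + 1) (m : ZMod (m + 1)) 1 = 1 := by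
    have h1 : ((m : ZMod (m + 1))).val = m := ZMod.val_natCast_of_lt (by omega)
    haveI : Fact (1 < m + 1) := ⟨hp2⟩
    have h2 : (1 : ZMod (m + 1)).val = 1 := ZMod.val_one _
    simp [ovf, h1, h2]
  simp only [fpMul, hov, ovf_left_zero, ovf_right_zero]
  refine Prod.ext h0 (Prod.ext (by simp) (Prod.ext ?_ (Prod.ext ?_ (Prod.ext ?_ ?_)))) <;>
    [linear_combination z3 * h0; linear_combination z4 * h0;
     linear_combination z5 * h0; linear_combination z6 * h0]

lemma fpPow_b_p (hp2 : 1 < p) (z3 z4 z5 z6 : ZMod p) :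
    fpPow p (0, 1, z3, z4, z5, z6) p = (0, 0, 0, 1, 0, 0) := by
  obtain ⟨m, rfl⟩ : ∃ m, p = m + 1 := ⟨p - 1, by omega⟩
  rw [fpPow, fpPow_b _ hp2 _ _ _ _ m (by omega)]
  have h0 : ((m : ZMod (m + 1)) + 1) = 0 := by
    rw [← Nat.cast_one (R := ZMod (m + 1)), ← Nat.cast_add]
    exact ZMod.natCast_self _
  have hov : ovf (m + 1) (m : ZMod (m + 1)) 1 = 1 := by
    have h1 : ((m : ZMod (m + 1))).val = m := ZMod.val_natCast_of_lt (by omega)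
    haveI : Fact (1 < m + 1) := ⟨hp2⟩
    have h2 : (1 : ZMod (m + 1)).val = 1 := ZMod.val_one _
    simp [ovf, h1, h2]
  simp only [fpMul, hov, ovf_left_zero, ovf_right_zero]
  refine Prod.ext (by simp) (Prod.ext h0 (Prod.ext ?_ (Prod.ext ?_ (Prod.ext ?_ ?_)))) <;>
    [linear_combination z3 * h0; linear_combination z4 * h0;
     linear_combination z5 * h0; linear_combination z6 * h0]

end Aux

/-- If a subset `S` of `F_p` contains the identity, is closed under multiplication
and under left division (`u,v ∈ S`, `u·w = v` imply `w ∈ S`), and contains `x·z`, `y·z'`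
for some central `z,z'` (first two coordinates zero), then `S = F_p`. -/
theorem stmt_11 (p : ℕ) (hp : p.Prime) (S : Set (FpCarrier p))
    (h_one : ((0, 0, 0, 0, 0, 0) : FpCarrier p) ∈ S)
    (h_mul : ∀ u v, u ∈ S → v ∈ S → fpMul p u v ∈ S)
    (h_ld : ∀ u v, u ∈ S → v ∈ S → ∀ w, fpMul p u w = v → w ∈ S)
    (z z' : FpCarrier p)
    (hz : z.1 = 0 ∧ z.2.1 = 0) (hz' : z'.1 = 0 ∧ z'.2.1 = 0)
    (hxz : fpMul p (1, 0, 0, 0, 0, 0) z ∈ S)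
    (hyz : fpMul p (0, 1, 0, 0, 0, 0) z' ∈ S) :
    S = Set.univ := by
  haveI : NeZero p := ⟨hp.ne_zero⟩
  have hp2 : 1 < p := hp.one_lt
  obtain ⟨z1, z2, a3, a4, a5, a6⟩ := z
  obtain ⟨w1, w2, b3, b4, b5, b6⟩ := z'
  simp only [Prod.fst, Prod.snd] at hz hz'
  obtain ⟨rfl, rfl⟩ := hz
  obtain ⟨rfl, rfl⟩ := hz'
  -- the generators a = x·z, b = y·z'
  set A : FpCarrier p := (1, 0, a3, a4, a5, a6) with hA_def
  set B : FpCarrier p := (0, 1, b3, b4, b5, b6) with hB_def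
  have hA : A ∈ S := by
    have : fpMul p (1, 0, 0, 0, 0, 0) (0, 0, a3, a4, a5, a6) = A := by
      simp [fpMul, ovf_left_zero, ovf_right_zero, hA_def]
    rwa [this] at hxz
  have hB : B ∈ S := by
    have : fpMul p (0, 1, 0, 0, 0, 0) (0, 0, b3, b4, b5, b6) = B := by
      simp [fpMul, ovf_left_zero, ovf_right_zero, hB_def]
    rwa [this] at hyz
  -- powers stay in S
  have hpow : ∀ u ∈ S, ∀ n, fpPow p u n ∈ S := by
    intro u hu n
    induction n with
    | zero => exact h_one
    | succ n ih => exact h_mul _ _ ih hu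
  -- the central generators e3, e4
  have he3 : ((0, 0, 1, 0, 0, 0) : FpCarrier p) ∈ S := by
    have := hpow A hA p
    rwa [hA_def, fpPow_a_p p hp2] at this
  have he4 : ((0, 0, 0, 1, 0, 0) : FpCarrier p) ∈ S := by
    have := hpow B hB p
    rwa [hB_def, fpPow_b_p p hp2] at this
  -- e5' = (0,0,0,0,-1,0) via the associator of A, A, B
  have he5 : ((0, 0, 0, 0, -1, 0) : FpCarrier p) ∈ S := by
    refine h_ld (fpMul p (fpMul p A A) B) (fpMul p A (fpMul p A B))
      (h_mul _ _ (h_mul _ _ hA hA) hB) (h_mul _ _ hA (h_mul _ _ hA hB)) _ ?_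
    simp only [hA_def, hB_def, fpMul, add_zero, zero_add, mul_zero, zero_mul, mul_one,
      one_mul, ovf_left_zero, ovf_right_zero]
    refine Prod.ext (by ring) (Prod.ext (by ring) (Prod.ext ?_ (Prod.ext ?_
      (Prod.ext ?_ ?_)))) <;> ring
  -- e6 = (0,0,0,0,0,1) via the associator of B, B, A
  have he6 : ((0, 0, 0, 0, 0, 1) : FpCarrier p) ∈ S := by
    refine h_ld (fpMul p (fpMul p B B) A) (fpMul p B (fpMul p B A))
      (h_mul _ _ (h_mul _ _ hB hB) hA) (h_mul _ _ hB (h_mul _ _ hB hA)) _ ?_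
    simp only [hA_def, hB_def, fpMul, add_zero, zero_add, mul_zero, zero_mul, mul_one,
      one_mul, ovf_left_zero, ovf_right_zero]
    refine Prod.ext (by ring) (Prod.ext (by ring) (Prod.ext ?_ (Prod.ext ?_
      (Prod.ext ?_ ?_)))) <;> ring
  -- all central elements are in S
  have hcent : ∀ c3 c4 c5 c6 : ZMod p, ((0, 0, c3, c4, c5, c6) : FpCarrier p) ∈ S := by
    intro c3 c4 c5 c6
    have h3 : fpPow p ((0, 0, 1, 0, 0, 0) : FpCarrier p) c3.val
        = (0, 0, c3, 0, 0, 0) := by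
      rw [fpPow_central]
      simp [ZMod.natCast_val, ZMod.cast_id]
    have h4 : fpPow p ((0, 0, 0, 1, 0, 0) : FpCarrier p) c4.val
        = (0, 0, 0, c4, 0, 0) := by
      rw [fpPow_central]
      simp [ZMod.natCast_val, ZMod.cast_id]
    have h5 : fpPow p ((0, 0, 0, 0, -1, 0) : FpCarrier p) (-c5).val
        = (0, 0, 0, 0, c5, 0) := by
      rw [fpPow_central]
      simp [ZMod.natCast_val, ZMod.cast_id]
    have h6 : fpPow p ((0, 0, 0, 0, 0, 1) : FpCarrier p) c6.val
        = (0, 0, 0, 0, 0, c6) := by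
      rw [fpPow_central]
      simp [ZMod.natCast_val, ZMod.cast_id]
    have m3 := hpow _ he3 c3.val; rw [h3] at m3
    have m4 := hpow _ he4 c4.val; rw [h4] at m4
    have m5 := hpow _ he5 (-c5).val; rw [h5] at m5
    have m6 := hpow _ he6 c6.val; rw [h6] at m6
    have := h_mul _ _ (h_mul _ _ (h_mul _ _ m3 m4) m5) m6
    rw [fpMul_central, fpMul_central, fpMul_central] at this
    simpa using this
  -- main argument
  ext t
  simp only [Set.mem_univ, iff_true]
  obtain ⟨t1, t2, t3, t4, t5, t6⟩ := t
  -- w = A^{t1.val} · B^{t2.val}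
  have hAn := hpow A hA t1.val
  have hBn := hpow B hB t2.val
  rw [hA_def, fpPow_a p hp2 _ _ _ _ _ (ZMod.val_lt t1)] at hAn
  rw [hB_def, fpPow_b p hp2 _ _ _ _ _ (ZMod.val_lt t2)] at hBn
  have hw := h_mul _ _ hAn hBn
  have hw_eq : fpMul p ((t1.val : ZMod p), 0, t1.val * a3, t1.val * a4, t1.val * a5, t1.val * a6)
      (0, (t2.val : ZMod p), t2.val * b3, t2.val * b4, t2.val * b5, t2.val * b6)
      = ((t1.val : ZMod p), (t2.val : ZMod p),
         t1.val * a3 + t2.val * b3, t1.val * a4 + t2.val * b4,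
         t1.val * a5 + t2.val * b5, t1.val * a6 + t2.val * b6) := by
    simp only [fpMul, ovf_left_zero, ovf_right_zero]
    refine Prod.ext (by ring) (Prod.ext (by ring) (Prod.ext (by ring) (Prod.ext (by ring)
      (Prod.ext (by ring) (by ring)))))
  rw [hw_eq] at hw
  have ht1 : ((t1.val : ZMod p)) = t1 := by simp [ZMod.natCast_val, ZMod.cast_id]
  have ht2 : ((t2.val : ZMod p)) = t2 := by simp [ZMod.natCast_val, ZMod.cast_id]
  have hv := hcent (t3 - (t1.val * a3 + t2.val * b3)) (t4 - (t1.val * a4 + t2.val * b4))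
    (t5 - (t1.val * a5 + t2.val * b5)) (t6 - (t1.val * a6 + t2.val * b6))
  have := h_mul _ _ hw hv
  rw [fpMul_central_right] at this
  simpa [ht1, ht2] using this
end

section
/- Let p be a prime and let λ : F_p → F_p be a bijection with λ(u·v) = λ(u)·λ(v) for all u,v, satisfying λ(1,0,0,0,0,0) = (α1,α2,0,0,0,0) and λ(0,1,0,0,0,0) = (β1,β2,0,0,0,0); set d = α1·β2 − α2·β1. Then: λ(0,0,0,0,1,0) = (0,0,0,0,α1·d,α2·d) and λ(0,0,0,0,0,1) = (0,0,0,0,β1·d,β2·d); if p ≠ 3 then λ(0,0,1,0,0,0) = (0,0,α1,α2,0,0) and λ(0,0,0,1,0,0) = (0,0,β1,β2,0,0); if p = 3 then λ(0,0,1,0,0,0) = (0,0,α1,α2,α1²·α2,−α1·α2²) and λ(0,0,0,1,0,0) = (0,0,β1,β2,β1²·β2,−β1·β2²). -/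
open Finset

lemma ovf_zero_left (p : ℕ) [NeZero p] (a : ZMod p) : ovf p 0 a = 0 := by
  simp [ovf, Nat.not_le.mpr (ZMod.val_lt a)]

lemma ovf_zero_right (p : ℕ) [NeZero p] (a : ZMod p) : ovf p a 0 = 0 := by
  simp [ovf, Nat.not_le.mpr (ZMod.val_lt a)]

lemma ovf_cocycle (p : ℕ) [NeZero p] (a b c : ZMod p) :
    ovf p a b + ovf p (a+b) c = ovf p b c + ovf p a (b+c) := by
  unfold ovf
  have hab : (a+b).val = (a.val + b.val) % p := ZMod.val_add a b
  have hbc : (b+c).val = (b.val + c.val) % p := ZMod.val_add b c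
  have ha := ZMod.val_lt a; have hb := ZMod.val_lt b; have hc := ZMod.val_lt c
  have hp : 0 < p := NeZero.pos p
  rw [hab, hbc]
  rcases le_or_gt p (a.val + b.val) with h1 | h1
  · rw [Nat.mod_eq_sub_mod h1, Nat.mod_eq_of_lt (by omega)]
    rcases le_or_gt p (b.val + c.val) with h2 | h2
    · rw [Nat.mod_eq_sub_mod h2, Nat.mod_eq_of_lt (by omega)]
      split_ifs <;> first | ring1 | (exfalso; omega)
    · rw [Nat.mod_eq_of_lt h2]
      split_ifs <;> first | ring1 | (exfalso; omega)
  · rw [Nat.mod_eq_of_lt h1]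
    rcases le_or_gt p (b.val + c.val) with h2 | h2
    · rw [Nat.mod_eq_sub_mod h2, Nat.mod_eq_of_lt (by omega)]
      split_ifs <;> first | ring1 | (exfalso; omega)
    · rw [Nat.mod_eq_of_lt h2]
      split_ifs <;> first | ring1 | (exfalso; omega)

lemma fpMul_left_cancel {p : ℕ} {u v w : FpCarrier p}
    (h : fpMul p u v = fpMul p u w) : v = w := by
  obtain ⟨u1,u2,u3,u4,u5,u6⟩ := u
  obtain ⟨v1,v2,v3,v4,v5,v6⟩ := v
  obtain ⟨w1,w2,w3,w4,w5,w6⟩ := w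
  simp only [fpMul, Prod.mk.injEq] at h ⊢
  obtain ⟨h1,h2,h3,h4,h5,h6⟩ := h
  have e1 : v1 = w1 := by linear_combination h1
  have e2 : v2 = w2 := by linear_combination h2
  subst e1 e2
  refine ⟨rfl, rfl, by linear_combination h3, by linear_combination h4,
    by linear_combination h5, by linear_combination h6⟩

lemma fpMul_one_left {p : ℕ} [NeZero p] (w : FpCarrier p) :
    fpMul p (0,0,0,0,0,0) w = w := by
  obtain ⟨w1,w2,w3,w4,w5,w6⟩ := w
  simp [fpMul, ovf_zero_left]
open Finset

lemma nat_div_add_carry (p m v : ℕ) (hp : 0 < p) (hv : v < p) :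
    (m + v)/p = m/p + (if p ≤ m % p + v then 1 else 0) := by
  have h0 := Nat.div_add_mod m p
  have hr : m % p < p := Nat.mod_lt m hp
  conv_lhs => rw [← h0]
  rw [add_assoc, Nat.mul_add_div hp]
  congr 1
  split_ifs with h
  · have : m % p + v = (m % p + v - p) + 1 * p := by omega
    rw [this, Nat.add_mul_div_right _ _ hp, Nat.div_eq_of_lt (by omega)]
  · exact Nat.div_eq_of_lt (by omega)

lemma tri_sum (n : ℕ) : 3 * ∑ k ∈ range n, k*(k+1) = (n-1)*n*(n+1) := by
  induction n with
  | zero => simp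
  | succ n ih =>
    rw [Finset.sum_range_succ, Nat.mul_add, ih]
    cases n with
    | zero => simp
    | succ m =>
      simp only [Nat.succ_sub_one]
      ring

lemma sum_eval (p : ℕ) (hp : p.Prime) :
    (∑ k ∈ range p, (k:ZMod p)*((k:ZMod p)+1)) = if p = 3 then -1 else 0 := by
  haveI : Fact p.Prime := ⟨hp⟩
  haveI : NeZero p := ⟨hp.pos.ne'⟩
  have hS : (∑ k ∈ range p, (k:ZMod p)*((k:ZMod p)+1))
      = ((∑ k ∈ range p, k*(k+1) : ℕ) : ZMod p) := by
    push_cast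
    rfl
  have key : (3 : ZMod p) * (∑ k ∈ range p, (k:ZMod p)*((k:ZMod p)+1)) = 0 := by
    rw [hS]
    have : ((3:ℕ) : ZMod p) * ((∑ k ∈ range p, k*(k+1) : ℕ) : ZMod p)
        = (((p-1)*p*(p+1) : ℕ) : ZMod p) := by
      rw [← Nat.cast_mul, tri_sum]
    push_cast [ZMod.natCast_self] at this ⊢
    rw [this]; ring
  split_ifs with h3
  · subst h3; decide
  · have h3ne : (3 : ZMod p) ≠ 0 := by
      intro h
      have : ((3:ℕ) : ZMod p) = 0 := by push_cast; exact h
      rw [ZMod.natCast_eq_zero_iff] at this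
      exact h3 ((Nat.prime_dvd_prime_iff_eq hp (by norm_num)).mp this)
    exact (mul_eq_zero.mp key).resolve_left h3ne

def fpow (p : ℕ) (u : FpCarrier p) : ℕ → FpCarrier p
  | 0 => (0,0,0,0,0,0)
  | n+1 => fpMul p (fpow p u n) u

lemma ovf_step (p : ℕ) [NeZero p] (a : ZMod p) (n : ℕ) :
    (((n+1)*a.val/p : ℕ) : ZMod p) = ((n*a.val/p : ℕ) : ZMod p) + ovf p ((n:ZMod p)*a) a := by
  have hv : ((n:ZMod p)*a).val = (n*a.val) % p := by
    rw [ZMod.val_mul, ZMod.val_natCast, Nat.mod_mul_mod]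
  have h1 : (n+1)*a.val = n*a.val + a.val := by ring
  rw [ovf, hv, h1, nat_div_add_carry p (n*a.val) a.val (NeZero.pos p) (ZMod.val_lt a)]
  push_cast [apply_ite (fun m : ℕ => (m : ZMod p))]
  rfl

lemma fpow_formula (p : ℕ) [NeZero p] (a b : ZMod p) (n : ℕ) :
    fpow p (a,b,0,0,0,0) n =
      ((n:ZMod p)*a, (n:ZMod p)*b, ((n*a.val/p : ℕ) : ZMod p), ((n*b.val/p : ℕ) : ZMod p),
       -(a^2*b) * ∑ k ∈ range n, (k:ZMod p)*((k:ZMod p)+1),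
       a*b^2 * ∑ k ∈ range n, (k:ZMod p)*((k:ZMod p)+1)) := by
  induction n with
  | zero => simp [fpow]
  | succ n ih =>
    rw [fpow, ih]
    simp only [fpMul, Prod.mk.injEq, Finset.sum_range_succ]
    refine ⟨by push_cast; ring, by push_cast; ring, ?_, ?_, by push_cast; ring, by push_cast; ring⟩
    · rw [ovf_step]; ring
    · rw [ovf_step]; ring

lemma fpMul_one_right {p : ℕ} [NeZero p] (w : FpCarrier p) :
    fpMul p w (0,0,0,0,0,0) = w := by
  obtain ⟨w1,w2,w3,w4,w5,w6⟩ := w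
  simp [fpMul, ovf_zero_right]


/-- The action of an automorphism `λ` of `F_p` with `λ(x) = (α1,α2,0,0,0,0)` and
`λ(y) = (β1,β2,0,0,0,0)` on the center, with `d = α1β2 − α2β1` (Lemma 5.1). -/
theorem stmt_13 (p : ℕ) (hp : p.Prime) (α1 α2 β1 β2 : ZMod p)
    (lam : FpCarrier p → FpCarrier p)
    (h_bij : Function.Bijective lam)
    (h_hom : ∀ u v, lam (fpMul p u v) = fpMul p (lam u) (lam v))
    (h_x : lam (1, 0, 0, 0, 0, 0) = (α1, α2, 0, 0, 0, 0))
    (h_y : lam (0, 1, 0, 0, 0, 0) = (β1, β2, 0, 0, 0, 0)) :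
    let d : ZMod p := α1 * β2 - α2 * β1
    lam (0, 0, 0, 0, 1, 0) = (0, 0, 0, 0, α1 * d, α2 * d) ∧
    lam (0, 0, 0, 0, 0, 1) = (0, 0, 0, 0, β1 * d, β2 * d) ∧
    (p ≠ 3 →
      lam (0, 0, 1, 0, 0, 0) = (0, 0, α1, α2, 0, 0) ∧
      lam (0, 0, 0, 1, 0, 0) = (0, 0, β1, β2, 0, 0)) ∧
    (p = 3 →
      lam (0, 0, 1, 0, 0, 0) = (0, 0, α1, α2, α1 ^ 2 * α2, -(α1 * α2 ^ 2)) ∧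
      lam (0, 0, 0, 1, 0, 0) = (0, 0, β1, β2, β1 ^ 2 * β2, -(β1 * β2 ^ 2))) := by
  haveI hfp : Fact p.Prime := ⟨hp⟩
  haveI : NeZero p := ⟨hp.pos.ne'⟩
  haveI : Fact (1 < p) := ⟨hp.one_lt⟩
  intro d
  have hd : d = α1 * β2 - α2 * β1 := rfl
  set x : FpCarrier p := (1,0,0,0,0,0) with hxdef
  set y : FpCarrier p := (0,1,0,0,0,0) with hydef
  -- lam preserves the identity
  have lam_one : lam (0,0,0,0,0,0) = ((0:ZMod p),0,0,0,0,0) := by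
    have h := h_hom (0,0,0,0,0,0) (0,0,0,0,0,0)
    rw [fpMul_one_left] at h
    have h2 : fpMul p (lam (0,0,0,0,0,0)) (lam (0,0,0,0,0,0))
        = fpMul p (lam (0,0,0,0,0,0)) ((0:ZMod p),0,0,0,0,0) := by
      rw [fpMul_one_right]; exact h.symm
    exact fpMul_left_cancel h2
  have lam_fpow : ∀ (u : FpCarrier p) (n : ℕ), lam (fpow p u n) = fpow p (lam u) n := by
    intro u n
    induction n with
    | zero => exact lam_one
    | succ n ih => rw [fpow, h_hom, ih, fpow]
  -- the central elements e5, e6 via associators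
  have lamA : lam (fpMul p x (fpMul p x y)) =
      fpMul p (α1,α2,0,0,0,0) (fpMul p (α1,α2,0,0,0,0) (β1,β2,0,0,0,0)) := by
    rw [h_hom, h_hom, h_x, h_y]
  have lamB : lam (fpMul p (fpMul p x x) y) =
      fpMul p (fpMul p (α1,α2,0,0,0,0) (α1,α2,0,0,0,0)) (β1,β2,0,0,0,0) := by
    rw [h_hom, h_hom, h_x, h_y]
  have id5 : fpMul p (fpMul p x (fpMul p x y)) (0,0,0,0,1,0) = fpMul p (fpMul p x x) y := by
    simp only [hxdef, hydef, fpMul, Prod.mk.injEq, ovf_zero_left, ovf_zero_right]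
    norm_num [ovf_zero_left, ovf_zero_right]
  have h5 := h_hom (fpMul p x (fpMul p x y)) ((0:ZMod p),0,0,0,1,0)
  rw [id5, lamA, lamB] at h5
  have t5 : fpMul p
      (fpMul p (α1,α2,0,0,0,0) (fpMul p (α1,α2,0,0,0,0) (β1,β2,0,0,0,0)))
      ((0:ZMod p),0,0,0,α1*d,α2*d) =
      fpMul p (fpMul p (α1,α2,0,0,0,0) (α1,α2,0,0,0,0)) (β1,β2,0,0,0,0) := by
    simp only [fpMul, Prod.mk.injEq, ovf_zero_left, ovf_zero_right, hd]
    refine ⟨by ring1, by ring1, by linear_combination -(ovf_cocycle p α1 α1 β1),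
      by linear_combination -(ovf_cocycle p α2 α2 β2), by ring1, by ring1⟩
  have res5 : lam (0,0,0,0,1,0) = ((0:ZMod p),0,0,0,α1*d,α2*d) :=
    fpMul_left_cancel (h5.symm.trans t5.symm)
  -- e6
  have lamA' : lam (fpMul p x (fpMul p y y)) =
      fpMul p (α1,α2,0,0,0,0) (fpMul p (β1,β2,0,0,0,0) (β1,β2,0,0,0,0)) := by
    rw [h_hom, h_hom, h_x, h_y]
  have lamB' : lam (fpMul p (fpMul p x y) y) =
      fpMul p (fpMul p (α1,α2,0,0,0,0) (β1,β2,0,0,0,0)) (β1,β2,0,0,0,0) := by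
    rw [h_hom, h_hom, h_x, h_y]
  have id6 : fpMul p (fpMul p x (fpMul p y y)) (0,0,0,0,0,1) = fpMul p (fpMul p x y) y := by
    simp only [hxdef, hydef, fpMul, Prod.mk.injEq, ovf_zero_left, ovf_zero_right]
    norm_num [ovf_zero_left, ovf_zero_right]
  have h6 := h_hom (fpMul p x (fpMul p y y)) ((0:ZMod p),0,0,0,0,1)
  rw [id6, lamA', lamB'] at h6
  have t6 : fpMul p
      (fpMul p (α1,α2,0,0,0,0) (fpMul p (β1,β2,0,0,0,0) (β1,β2,0,0,0,0)))
      ((0:ZMod p),0,0,0,β1*d,β2*d) =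
      fpMul p (fpMul p (α1,α2,0,0,0,0) (β1,β2,0,0,0,0)) (β1,β2,0,0,0,0) := by
    simp only [fpMul, Prod.mk.injEq, ovf_zero_left, ovf_zero_right, hd]
    refine ⟨by ring1, by ring1, by linear_combination -(ovf_cocycle p α1 β1 β1),
      by linear_combination -(ovf_cocycle p α2 β2 β2), by ring1, by ring1⟩
  have res6 : lam (0,0,0,0,0,1) = ((0:ZMod p),0,0,0,β1*d,β2*d) :=
    fpMul_left_cancel (h6.symm.trans t6.symm)
  -- e3, e4 via p-th powers
  have hx_pow : fpow p x p = ((0:ZMod p),0,1,0,0,0) := by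
    rw [hxdef, fpow_formula]
    have hv1 : (1 : ZMod p).val = 1 := ZMod.val_one p
    have hv0 : (0 : ZMod p).val = 0 := ZMod.val_zero
    simp [hv1, hv0, ZMod.natCast_self, Nat.div_self hp.pos]
  have hy_pow : fpow p y p = ((0:ZMod p),0,0,1,0,0) := by
    rw [hydef, fpow_formula]
    have hv1 : (1 : ZMod p).val = 1 := ZMod.val_one p
    have hv0 : (0 : ZMod p).val = 0 := ZMod.val_zero
    simp [hv1, hv0, ZMod.natCast_self, Nat.div_self hp.pos]
  have lam_e3 : lam (0,0,1,0,0,0) =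
      ((0:ZMod p), 0, α1, α2, -(α1^2*α2) * (if p = 3 then (-1:ZMod p) else 0),
        α1*α2^2 * (if p = 3 then (-1:ZMod p) else 0)) := by
    rw [← hx_pow, lam_fpow, h_x, fpow_formula, sum_eval p hp]
    have : ((p * (α1.val) / p : ℕ) : ZMod p) = α1 := by
      rw [Nat.mul_div_cancel_left _ hp.pos]; exact ZMod.natCast_rightInverse α1
    have h2 : ((p * (α2.val) / p : ℕ) : ZMod p) = α2 := by
      rw [Nat.mul_div_cancel_left _ hp.pos]; exact ZMod.natCast_rightInverse α2
    simp [this, h2, ZMod.natCast_self]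
  have lam_e4 : lam (0,0,0,1,0,0) =
      ((0:ZMod p), 0, β1, β2, -(β1^2*β2) * (if p = 3 then (-1:ZMod p) else 0),
        β1*β2^2 * (if p = 3 then (-1:ZMod p) else 0)) := by
    rw [← hy_pow, lam_fpow, h_y, fpow_formula, sum_eval p hp]
    have : ((p * (β1.val) / p : ℕ) : ZMod p) = β1 := by
      rw [Nat.mul_div_cancel_left _ hp.pos]; exact ZMod.natCast_rightInverse β1
    have h2 : ((p * (β2.val) / p : ℕ) : ZMod p) = β2 := by
      rw [Nat.mul_div_cancel_left _ hp.pos]; exact ZMod.natCast_rightInverse β2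
    simp [this, h2, ZMod.natCast_self]
  refine ⟨res5, res6, ?_, ?_⟩
  · intro hne
    rw [lam_e3, lam_e4, if_neg hne]
    norm_num
  · intro heq
    rw [lam_e3, lam_e4, if_pos heq]
    norm_num
end
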